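/- Let L be a finite-dimensional Lie algebra over any field F in which every maximal subalgebra of each maximal nilpotent subalgebra of L is a c-ideal of L, and let A be a minimal abelian ideal of L. Then every maximal subalgebra of each maximal nilpotent subalgebra of L/A is a c-ideal of L/A. -/

import Mathlib

/-! Common definitions: c-ideals and related notions for Lie algebras
(following D. Towers, "C-ideals of Lie algebras"). -/

section Defs

variable (F : Type*) {L : Type*} [Field F] [LieRing L] [LieAlgebra F L]

/-- `B` is a *c-ideal* of `L`: there is an ideal `C` of `L` with `L = B + C` and
`B ∩ C ≤ B_L`, where `B_L` is the largest ideal of `L` contained in `B`; equivalently,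
`B ∩ C` is contained in some ideal `D` of `L` with `D ≤ B`. -/
def IsCIdeal (B : LieSubalgebra F L) : Prop :=
  ∃ C : LieIdeal F L,
    B.toSubmodule ⊔ (C : Submodule F L) = ⊤ ∧
    ∃ D : LieIdeal F L, (∀ x ∈ D, x ∈ B) ∧ ∀ x ∈ B, x ∈ C → x ∈ D

/-- A maximal subalgebra of `L`: proper, and maximal among proper subalgebras. -/
def IsMaximalSubalgebra (M : LieSubalgebra F L) : Prop :=
  M ≠ ⊤ ∧ ∀ K : LieSubalgebra F L, M < K → K = ⊤

/-- `B` is a maximal subalgebra of the subalgebra `C`: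
`B` is a proper subalgebra of `C`, maximal among proper subalgebras contained in `C`. -/
def IsMaximalSubalgebraOf (B C : LieSubalgebra F L) : Prop :=
  B < C ∧ ∀ K : LieSubalgebra F L, B < K → K ≤ C → K = C

/-- A maximal nilpotent subalgebra of `L`:
nilpotent and maximal among nilpotent subalgebras. -/
def IsMaximalNilpotentSubalgebra (C : LieSubalgebra F L) : Prop :=
  LieRing.IsNilpotent C ∧
    ∀ D : LieSubalgebra F L, LieRing.IsNilpotent D → C ≤ D → C = D

/-- The natural quotient map `L → L ⧸ I` as a morphism of Lie algebras. -/
def quotMk (I : LieIdeal F L) : L →ₗ⁅F⁆ L ⧸ I :=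
  { (LieSubmodule.Quotient.mk' I).toLinearMap with
    map_lie' := fun {_ _} => rfl }

/-- A supersolvable Lie algebra: there is a chain of ideals `0 = L_0 ⊆ ⋯ ⊆ L_n = L`
with `dim L_i = i` for each `0 ≤ i ≤ n`. -/
def IsSupersolvable (L : Type*) [LieRing L] [LieAlgebra F L] : Prop :=
  ∃ (n : ℕ) (c : ℕ → LieIdeal F L), Monotone c ∧ c 0 = ⊥ ∧ c n = ⊤ ∧
    ∀ i ≤ n, Module.finrank F (c i) = i

/-- A minimal abelian ideal of `L`: a nonzero abelian ideal `A` such that the only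
ideals of `L` contained in `A` are `0` and `A`. -/
def IsMinimalAbelianIdeal (A : LieIdeal F L) : Prop :=
  A ≠ ⊥ ∧ IsLieAbelian A ∧ ∀ I : LieIdeal F L, I ≤ A → I = ⊥ ∨ I = A

/-- The one-dimensional subspace spanned by `x`, as a Lie subalgebra
(it is closed under the bracket since `⁅x,x⁆ = 0`). -/
def lineSpan (x : L) : LieSubalgebra F L :=
  { Submodule.span F {x} with
    lie_mem' := by
      intro a b ha hb
      replace ha : a ∈ Submodule.span F {x} := ha
      replace hb : b ∈ Submodule.span F {x} := hb
      rw [Submodule.mem_span_singleton] at ha hb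
      obtain ⟨c, rfl⟩ := ha
      obtain ⟨d, rfl⟩ := hb
      show ⁅c • x, d • x⁆ ∈ Submodule.span F {x}
      simp }

/-- The Frattini subalgebra of a Lie algebra: the intersection of all maximal subalgebras. -/
def frattiniSubalgebra (L : Type*) [LieRing L] [LieAlgebra F L] : LieSubalgebra F L :=
  sInf {M : LieSubalgebra F L | IsMaximalSubalgebra F M}

/-- An almost abelian Lie algebra `K`: `K = K² ⊕ Fx` for some `x ∈ K`, where the derived
subalgebra `K²` is abelian and `⁅x, y⁆ = y` for all `y ∈ K²`. -/
def IsAlmostAbelian (K : Type*) [LieRing K] [LieAlgebra F K] : Prop :=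
  ∃ x : K, IsLieAbelian (LieAlgebra.derivedSeries F K 1) ∧
    (∀ y ∈ LieAlgebra.derivedSeries F K 1, ⁅x, y⁆ = y) ∧
    (LieAlgebra.derivedSeries F K 1 : Submodule F K) ⊔ Submodule.span F {x} = ⊤ ∧
    (LieAlgebra.derivedSeries F K 1 : Submodule F K) ⊓ Submodule.span F {x} = ⊥

end Defs

/-!
Let `π : L → L/A`. A subalgebra `M` of `L` that is minimal among those with `π(M) = Cq` is
nilpotent: for `x ∈ M`, the Fitting decomposition of `ad x` on `M` splits `M` into a part inside
the Engel subalgebra of `x` and a part `(ad x)ⁿ M` with `n` large, which `π` kills because `ad` is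
nilpotent on `Cq`; so `M ∩ engel x` still maps onto `Cq`, hence equals `M`, and Engel's theorem
applies. Enlarging `M`, we get a maximal nilpotent `N` with `π(N) = Cq`.
Then `B₀ = π⁻¹(Bq) ∩ N` is a maximal subalgebra of `N`, so a c-ideal of `L` with witnesses `C, D`,
and `π(C), π(D)` witness that `Bq = π(B₀)` is a c-ideal of `L/A` as soon as `A ≤ C` or `A ≤ B₀`.
By minimality `[L, A]` is `0` or `A`. If it is `0`, `A` is central, and a maximal nilpotent
subalgebra contains the centre, so `A ≤ B₀`. If it is `A`, then `A` lies in every term of the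
lower central series of `L`, whereas `L/C` is nilpotent as an image of `N`; so `A ≤ C`.
-/

open LieAlgebra LieModule Filter

section CommRing

variable {R L L' : Type*} [CommRing R] [LieRing L] [LieAlgebra R L] [LieRing L'] [LieAlgebra R L']

lemma LieHom.map_ad_pow (f : L →ₗ⁅R⁆ L') (x y : L) (n : ℕ) :
    f ((ad R L x ^ n) y) = (ad R L' (f x) ^ n) (f y) := by
  induction n with
  | zero => rfl
  | succ n ih => simp only [pow_succ', Module.End.mul_apply, ad_apply, LieHom.map_lie, ih]

lemma LieHom.isNilpotent_of_ker_le_center (g : L →ₗ⁅R⁆ L') (hg : g.ker ≤ center R L)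
    [LieRing.IsNilpotent g.range] : LieRing.IsNilpotent L :=
  nilpotent_of_nilpotent_quotient hg (g.quotKerEquivRange.nilpotent_iff_equiv_nilpotent.mpr ‹_›)

namespace LieSubalgebra

instance wellFoundedLT_of_artinian [IsArtinian R L] : WellFoundedLT (LieSubalgebra R L) :=
  RelHomClass.isWellFounded (⟨toSubmodule, @fun _ _ h ↦ h⟩ : _ →r (· < ·))

lemma isNilpotent_of_le {H K : LieSubalgebra R L} (hHK : H ≤ K) [LieRing.IsNilpotent K] :
    LieRing.IsNilpotent H :=
  (inclusion_injective hHK).lieAlgebra_isNilpotent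

lemma isNilpotent_map (f : L →ₗ⁅R⁆ L') (H : LieSubalgebra R L) [LieRing.IsNilpotent H] :
    LieRing.IsNilpotent (H.map f) := by
  have : H.map f = (f.comp H.incl).range := by ext; simp
  rw [this]
  exact (f.comp H.incl).isNilpotent_range

lemma exists_forall_ad_pow_eq_zero (H : LieSubalgebra R L) [LieRing.IsNilpotent H] :
    ∃ k, ∀ x ∈ H, ∀ y ∈ H, (ad R L x ^ k) y = 0 := by
  obtain ⟨k, hk⟩ := exists_forall_pow_toEnd_eq_zero R H H
  refine ⟨k, fun x hx y hy => ?_⟩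
  rw [← coe_ad_pow R L H ⟨x, hx⟩ ⟨y, hy⟩]
  exact congrArg Subtype.val (LinearMap.congr_fun (hk ⟨x, hx⟩) ⟨y, hy⟩)

variable {f : L →ₗ⁅R⁆ L'}

lemma map_comap_inf_eq {B' : LieSubalgebra R L'} {N : LieSubalgebra R L} (h : B' ≤ N.map f) :
    (B'.comap f ⊓ N).map f = B' := by
  refine le_antisymm (map_le_iff_le_comap.mpr inf_le_left) fun y hy => ?_
  obtain ⟨n, hn, rfl⟩ := h hy
  exact ⟨n, ⟨hy, hn⟩, rfl⟩

end LieSubalgebra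

end CommRing

section Field

variable {F L L' : Type*} [Field F] [LieRing L] [LieAlgebra F L] [LieRing L'] [LieAlgebra F L']

lemma quotMk_surjective (I : LieIdeal F L) : Function.Surjective (quotMk F I) :=
  LieSubmodule.Quotient.surjective_mk' I

@[simp]
lemma quotMk_eq_zero_iff {I : LieIdeal F L} {x : L} : quotMk F I x = 0 ↔ x ∈ I :=
  LieSubmodule.Quotient.mk_eq_zero'

lemma ker_quotMk (I : LieIdeal F L) : (quotMk F I).ker = I := by
  ext; simp [LieHom.mem_ker]

lemma LieIdeal.le_of_lie_top_eq_self_of_sup_eq_top {N : LieSubalgebra F L}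
    [LieRing.IsNilpotent N] {C : LieIdeal F L} (hNC : N.toSubmodule ⊔ C = ⊤) {A : LieIdeal F L}
    (hA : ⁅(⊤ : LieIdeal F L), A⁆ = A) : A ≤ C := by
  have hsurj : Function.Surjective ((quotMk F C).comp N.incl) := by
    intro y
    obtain ⟨x, rfl⟩ := quotMk_surjective C y
    obtain ⟨n, hn, c, hc, rfl⟩ := Submodule.mem_sup.mp (hNC ▸ Submodule.mem_top : x ∈ _)
    exact ⟨⟨n, hn⟩, by simp [quotMk_eq_zero_iff.mpr hc]⟩
  have := hsurj.lieAlgebra_isNilpotent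
  obtain ⟨k, hk⟩ := (LieModule.isNilpotent_iff F (L ⧸ C) (L ⧸ C)).mp this
  have hlcs : lowerCentralSeries F L L k ≤ C := by
    have := LieIdeal.lowerCentralSeries_map_eq k (quotMk_surjective C)
    rwa [hk, LieIdeal.map_eq_bot_iff, ker_quotMk] at this
  have hA_le : ∀ j, A ≤ lowerCentralSeries F L L j := by
    intro j
    induction j with
    | zero => exact le_top
    | succ j ih =>
      rw [← hA, lowerCentralSeries_succ]
      exact LieSubmodule.mono_lie_right ⊤ ih
  exact (hA_le k).trans hlcs

namespace LieSubalgebra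

variable {f : L →ₗ⁅F⁆ L'}

lemma isNilpotent_of_minimal_map_eq [FiniteDimensional F L] {H' : LieSubalgebra F L'}
    [LieRing.IsNilpotent H'] {M : LieSubalgebra F L} (hM : Minimal (fun K => K.map f = H') M) :
    LieRing.IsNilpotent M := by
  refine isNilpotent_of_forall_le_engel M fun x hx => ?_
  suffices hE : (M ⊓ engel F x).map f = H' from hM.eq_of_le hE inf_le_left ▸ inf_le_right
  obtain ⟨k, hk⟩ := H'.exists_forall_ad_pow_eq_zero
  set g := ad F M ⟨x, hx⟩
  obtain ⟨n, hn⟩ := eventually_atTop.mp g.eventually_codisjoint_ker_pow_range_pow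
  have hfit := (hn (max n k) le_sup_left).eq_top
  refine le_antisymm (hM.1 ▸ gc_map_comap.monotone_l inf_le_left) ?_
  rw [← hM.1]
  rintro _ ⟨y, hy, rfl⟩
  obtain ⟨u, hu, v, ⟨w, rfl⟩, huv⟩ :=
    Submodule.mem_sup.mp (hfit ▸ Submodule.mem_top (x := (⟨y, hy⟩ : M)))
  have hu_engel : (u : L) ∈ engel F x := by
    rw [mem_engel_iff]
    exact ⟨max n k, by rw [← coe_ad_pow F L M ⟨x, hx⟩, LinearMap.mem_ker.mp hu]; rfl⟩
  have hv : f ((g ^ max n k) w : L) = 0 := by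
    rw [coe_ad_pow, f.map_ad_pow]
    exact Module.End.pow_map_zero_of_le le_sup_right
      (hk _ (hM.1 ▸ ⟨x, hx, rfl⟩) _ (hM.1 ▸ ⟨w, w.2, rfl⟩))
  have hy' : y = u + ((g ^ max n k) w : L) := congrArg Subtype.val huv.symm
  exact ⟨u, ⟨u.2, hu_engel⟩, by simp [hy', hv]⟩

lemma exists_isNilpotent_map_eq [FiniteDimensional F L] (hf : Function.Surjective f)
    (H' : LieSubalgebra F L') [LieRing.IsNilpotent H'] :
    ∃ M : LieSubalgebra F L, LieRing.IsNilpotent M ∧ M.map f = H' := by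
  have hcomap : (H'.comap f).map f = H' :=
    le_antisymm (map_le_iff_le_comap.mpr le_rfl) fun y hy => by
      obtain ⟨x, rfl⟩ := hf y
      exact ⟨x, hy, rfl⟩
  obtain ⟨M, hM⟩ :=
    exists_minimal_of_wellFoundedLT (fun K : LieSubalgebra F L => K.map f = H') ⟨_, hcomap⟩
  exact ⟨M, isNilpotent_of_minimal_map_eq hM, hM.1⟩

lemma isMaximalSubalgebraOf_comap_inf {B' : LieSubalgebra F L'} {N : LieSubalgebra F L}
    (h : IsMaximalSubalgebraOf F B' (N.map f)) :
    IsMaximalSubalgebraOf F (B'.comap f ⊓ N) N := by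
  obtain ⟨hlt, hmax⟩ := h
  refine ⟨lt_of_le_of_ne inf_le_right fun heq => hlt.ne ?_, fun K hBK hKN => ?_⟩
  · exact le_antisymm hlt.le (map_le_iff_le_comap.mpr (heq ▸ inf_le_left))
  have hB'K : B' < K.map f := by
    refine lt_of_le_of_ne ?_ fun heq => hBK.not_ge ?_
    · rw [← map_comap_inf_eq hlt.le]
      exact gc_map_comap.monotone_l hBK.le
    · exact le_inf (map_le_iff_le_comap.mp heq.ge) hKN
  have hKmap := hmax _ hB'K (gc_map_comap.monotone_l hKN)
  refine le_antisymm hKN fun n hn => ?_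
  obtain ⟨k, hk, hfk⟩ : ∃ k ∈ K, f k = f n := (mem_map f K (f n)).mp (hKmap ▸ ⟨n, hn, rfl⟩)
  have hnk : n - k ∈ B'.comap f ⊓ N :=
    ⟨by simp [hfk, B'.zero_mem], N.sub_mem hn (hKN hk)⟩
  simpa using K.add_mem (hBK.le hnk) hk

end LieSubalgebra

lemma exists_le_isMaximalNilpotentSubalgebra [FiniteDimensional F L] (M : LieSubalgebra F L)
    [LieRing.IsNilpotent M] : ∃ N, M ≤ N ∧ IsMaximalNilpotentSubalgebra F N := by
  obtain ⟨N, hMN, hN⟩ :=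
    exists_maximal_ge_of_wellFoundedGT (fun D : LieSubalgebra F L => LieRing.IsNilpotent D) M ‹_›
  exact ⟨N, hMN, hN.1, fun D hD hND => (hN.eq_of_ge hD hND).symm⟩

lemma exists_isMaximalNilpotentSubalgebra_map_eq [FiniteDimensional F L] {f : L →ₗ⁅F⁆ L'}
    (hf : Function.Surjective f) {C' : LieSubalgebra F L'}
    (hC' : IsMaximalNilpotentSubalgebra F C') :
    ∃ N, IsMaximalNilpotentSubalgebra F N ∧ N.map f = C' := by
  have := hC'.1
  obtain ⟨M, hM, hMC'⟩ := LieSubalgebra.exists_isNilpotent_map_eq hf C'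
  obtain ⟨N, hMN, hN⟩ := exists_le_isMaximalNilpotentSubalgebra M
  have := hN.1
  refine ⟨N, hN, (hC'.2 _ (LieSubalgebra.isNilpotent_map f N) ?_).symm⟩
  rw [← hMC']
  exact LieSubalgebra.gc_map_comap.monotone_l hMN

lemma IsMaximalNilpotentSubalgebra.center_le {N : LieSubalgebra F L}
    (hN : IsMaximalNilpotentSubalgebra F N) : (center F L : LieSubalgebra F L) ≤ N := by
  set π := quotMk F (center F L)
  set U := (N.map π).comap π
  have hNU : N ≤ U := LieSubalgebra.gc_map_comap.le_u_l N
  have hU : LieRing.IsNilpotent U := by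
    have := hN.1
    have := LieSubalgebra.isNilpotent_map π N
    have hrange : (π.comp U.incl).range ≤ N.map π := by
      rintro _ ⟨u, rfl⟩
      exact u.2
    have := LieSubalgebra.isNilpotent_of_le hrange
    refine (π.comp U.incl).isNilpotent_of_ker_le_center fun x hx y => ?_
    have hx : (x : L) ∈ center F L := quotMk_eq_zero_iff.mp hx
    exact Subtype.ext (hx y)
  rw [hN.2 U hU hNU]
  intro z hz
  simp [U, π, show quotMk F (center F L) z = 0 from quotMk_eq_zero_iff.mpr hz]

lemma isCIdeal_map {f : L →ₗ⁅F⁆ L'} (hf : Function.Surjective f) {B : LieSubalgebra F L}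
    {C D : LieIdeal F L} (hBC : B.toSubmodule ⊔ C = ⊤) (hDB : ∀ x ∈ D, x ∈ B)
    (hBCD : ∀ x ∈ B, x ∈ C → x ∈ D) (hker : f.ker ≤ C ∨ ∀ x ∈ f.ker, x ∈ B) :
    IsCIdeal F (B.map f) := by
  refine ⟨C.map f, ?_, D.map f, ?_, ?_⟩
  · refine eq_top_iff.mpr fun y _ => ?_
    obtain ⟨x, rfl⟩ := hf y
    obtain ⟨b, hb, c, hc, rfl⟩ := Submodule.mem_sup.mp (hBC ▸ Submodule.mem_top : x ∈ _)
    rw [map_add]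
    exact Submodule.add_mem_sup ⟨b, hb, rfl⟩ (LieIdeal.mem_map hc)
  · intro y hy
    obtain ⟨⟨d, hd⟩, rfl⟩ := LieIdeal.mem_map_of_surjective hf hy
    exact ⟨d, hDB d hd, rfl⟩
  · rintro _ ⟨b, hb, rfl⟩ hbC
    obtain ⟨⟨c, hc⟩, hcb⟩ := LieIdeal.mem_map_of_surjective hf hbC
    have hbc : b - c ∈ f.ker := by simp [LieHom.mem_ker, hcb]
    rcases hker with hkerC | hkerB
    · have hbC : b ∈ C := by simpa using C.add_mem (hkerC hbc) hc
      exact LieIdeal.mem_map (hBCD b hb hbC)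
    · have hcB : c ∈ B := by simpa using B.sub_mem hb (hkerB _ hbc)
      exact hcb ▸ LieIdeal.mem_map (hBCD c hcB hc)

end Field

/-- If every maximal subalgebra of each maximal nilpotent subalgebra of
`L` is a c-ideal of `L`, and `A` is a minimal abelian ideal of `L`, then every maximal
subalgebra of each maximal nilpotent subalgebra of `L/A` is a c-ideal of `L/A`. -/
theorem quotient_forall_maximal_of_maximalNilpotent_isCIdeal {F L : Type*} [Field F]
    [LieRing L] [LieAlgebra F L] [FiniteDimensional F L]
    (h : ∀ C : LieSubalgebra F L, IsMaximalNilpotentSubalgebra F C →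
      ∀ B : LieSubalgebra F L, IsMaximalSubalgebraOf F B C → IsCIdeal F B)
    (A : LieIdeal F L) (hA : IsMinimalAbelianIdeal F A) :
    ∀ C : LieSubalgebra F (L ⧸ A), IsMaximalNilpotentSubalgebra F C →
      ∀ B : LieSubalgebra F (L ⧸ A), IsMaximalSubalgebraOf F B C → IsCIdeal F B := by
  intro Cq hCq Bq hBq
  obtain ⟨N, hN, hNCq⟩ := exists_isMaximalNilpotentSubalgebra_map_eq (quotMk_surjective A) hCq
  rw [← hNCq] at hBq
  obtain ⟨C, hBC, D, hDB, hBCD⟩ := h N hN _ (LieSubalgebra.isMaximalSubalgebraOf_comap_inf hBq)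
  rw [← LieSubalgebra.map_comap_inf_eq hBq.1.le]
  refine isCIdeal_map (quotMk_surjective A) hBC hDB hBCD ?_
  rw [ker_quotMk]
  rcases hA.2.2 _ (LieSubmodule.lie_le_right A ⊤) with hcentral | hperfect
  · have hAN : ∀ x ∈ A, x ∈ N := fun x hx =>
      hN.center_le ((le_max_triv_iff_bracket_eq_bot F L L).mpr hcentral hx)
    exact Or.inr fun x hx => ⟨by simp [quotMk_eq_zero_iff.mpr hx, Bq.zero_mem], hAN x hx⟩
  · have := hN.1
    have hNC : N.toSubmodule ⊔ C = ⊤ := top_unique (hBC ▸ sup_le_sup_right (fun x hx => hx.2) _)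
    exact Or.inl (LieIdeal.le_of_lie_top_eq_self_of_sup_eq_top hNC hperfect)
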